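/- Let q = 2p be even with p ≥ 3, λ = 2·cos(π/q), and α ∈ (1/2, 1/λ). For every (t,v) ∈ A ∪ D_3, the minimum of the three quantities v/(1+tv), −t/(1+tv), −(1+2λt)(2λ−v)/(1+tv) is at most 1/(αλ+1) if α ≤ (λ−2+√(−3λ²+4λ+20))/(4λ), and at most 2λ(2α−1)/(4−λ²) if α > (λ−2+√(−3λ²+4λ+20))/(4λ). -/
import Mathlib


/-- The digit `d(x) = ⌊|1/(λx)| + 1 - α⌋` of the α-Rosen continued fraction. -/
noncomputable def rosenD (lam α x : ℝ) : ℤ := ⌊|1 / (lam * x)| + 1 - α⌋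

/-- The α-Rosen continued fraction map `T_α` on `[(α-1)λ, αλ)`. -/
noncomputable def rosenT (lam α x : ℝ) : ℝ :=
  if x = 0 then 0 else Real.sign x / x - lam * (rosenD lam α x : ℝ)

/-- `x` is `G_q`-irrational: the orbit of `x` under `T_α` never hits `0`. -/
def GIrrational (lam α x : ℝ) : Prop := ∀ n : ℕ, (rosenT lam α)^[n] x ≠ 0

/-- The recursion `u_n = d_n(x)·λ·u_{n-1} + ε_n(x)·u_{n-2}` for the numerators and
denominators of the α-Rosen convergents, with the index shifted by one:
`rosenPQ lam α x a b n = u_{n-1}` where `u_{-1} = a`, `u_0 = b`. -/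
noncomputable def rosenPQ (lam α x a b : ℝ) : ℕ → ℝ
  | 0 => a
  | 1 => b
  | n + 2 =>
      (rosenD lam α ((rosenT lam α)^[n] x) : ℝ) * lam * rosenPQ lam α x a b (n + 1)
        + Real.sign ((rosenT lam α)^[n] x) * rosenPQ lam α x a b n

/-- The approximation coefficient `Θ_n(x) = q_n² · |x - p_n/q_n|` of the α-Rosen
expansion of `x` (with `p_{-1}=1, q_{-1}=0, p_0=0, q_0=1`). -/
noncomputable def rosenTheta (lam α x : ℝ) (n : ℕ) : ℝ :=
  (rosenPQ lam α x 0 1 (n + 1)) ^ 2 *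
    |x - rosenPQ lam α x 1 0 (n + 1) / rosenPQ lam α x 0 1 (n + 1)|

/-- The natural extension map `𝒯_α(t,v) = (T_α(t), 1/(d(t)λ + ε(t)v))`. -/
noncomputable def rosenNE (lam α : ℝ) (tv : ℝ × ℝ) : ℝ × ℝ :=
  (rosenT lam α tv.1, 1 / ((rosenD lam α tv.1 : ℝ) * lam + Real.sign tv.1 * tv.2))

/-- The region `A`: `-δ₁ ≤ t ≤ -1/(λ+1)` and `g(t) ≤ v ≤ λ-1`, where
`g(x) = (|x| - 1/2)/((1/2)x)` and `δ₁ = 1/((α+1)λ)`. -/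
noncomputable def regA (lam α : ℝ) : Set (ℝ × ℝ) :=
  {tv | -(1 / ((α + 1) * lam)) ≤ tv.1 ∧ tv.1 ≤ -(1 / (lam + 1)) ∧
    (|tv.1| - 1 / 2) / ((1 / 2) * tv.1) ≤ tv.2 ∧ tv.2 ≤ lam - 1}

/-- The region `D₃`: `r_{p-1} ≤ t ≤ -2/(λ+4)` and `g(t) ≤ v ≤ λ/2`, where
`r_{p-1} = -(2α-1)λ/(2-(1-α)λ²)`. -/
noncomputable def regD3 (lam α : ℝ) : Set (ℝ × ℝ) :=
  {tv | -((2 * α - 1) * lam / (2 - (1 - α) * lam ^ 2)) ≤ tv.1 ∧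
    tv.1 ≤ -(2 / (lam + 4)) ∧
    (|tv.1| - 1 / 2) / ((1 / 2) * tv.1) ≤ tv.2 ∧ tv.2 ≤ lam / 2}

set_option maxHeartbeats 2000000 in
/-- **Corollary 3.13.**  For even `q = 2p`, `p ≥ 3`, `α ∈ (1/2, 1/λ)` and every
`(t,v) ∈ A ∪ D₃`, the minimum of `Θ_{n-1} = v/(1+tv)`, `Θ_n = -t/(1+tv)` and
`Θ_{n+1} = -(1+2λt)(2λ-v)/(1+tv)` is at most `1/(αλ+1)` when
`α ≤ (λ-2+√(-3λ²+4λ+20))/(4λ)` and at most `2λ(2α-1)/(4-λ²)` otherwise. -/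
theorem theta_min_bound_region_three (p : ℕ) (hp : 3 ≤ p) (lam : ℝ)
    (hlam : lam = 2 * Real.cos (Real.pi / (2 * (p : ℝ))))
    (α : ℝ) (hα : α ∈ Set.Ioo (1 / 2 : ℝ) (1 / lam))
    (t v : ℝ) (htv : (t, v) ∈ regA lam α ∪ regD3 lam α) :
    min (v / (1 + t * v))
        (min (-t / (1 + t * v)) (-((1 + 2 * lam * t) * (2 * lam - v)) / (1 + t * v))) ≤
      if α ≤ (lam - 2 + Real.sqrt (-3 * lam ^ 2 + 4 * lam + 20)) / (4 * lam) then
        1 / (α * lam + 1)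
      else 2 * lam * (2 * α - 1) / (4 - lam ^ 2) := by
  obtain ⟨hα1, hα2⟩ := hα
  -- basic facts about lam
  have hp3 : (3:ℝ) ≤ (p:ℝ) := by exact_mod_cast hp
  have hπ := Real.pi_pos
  have hθ0 : 0 < Real.pi / (2 * (p:ℝ)) := by positivity
  have hθπ : Real.pi / (2 * (p:ℝ)) ≤ Real.pi := by
    rw [div_le_iff₀ (by linarith)]; nlinarith
  have hlam2 : lam < 2 := by
    have h1 : Real.cos (Real.pi / (2 * (p:ℝ))) < Real.cos 0 :=
      Real.cos_lt_cos_of_nonneg_of_le_pi le_rfl hθπ hθ0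
    rw [Real.cos_zero] at h1
    rw [hlam]; linarith
  have hlam0 : 0 < lam := by
    rw [hlam]
    have : 0 < Real.cos (Real.pi / (2 * (p:ℝ))) := by
      apply Real.cos_pos_of_mem_Ioo
      constructor
      · linarith
      · rw [div_lt_iff₀ (by linarith)]; nlinarith
    linarith
  have halam : α * lam < 1 := by
    have := (lt_div_iff₀ hlam0).mp hα2; linarith
  -- sqrt facts
  set s := Real.sqrt (-3 * lam ^ 2 + 4 * lam + 20) with hs
  have hsq0 : (0:ℝ) ≤ -3 * lam ^ 2 + 4 * lam + 20 := by nlinarith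
  have hs2 : s ^ 2 = -3 * lam ^ 2 + 4 * lam + 20 := Real.sq_sqrt hsq0
  have hs0 : 0 ≤ s := Real.sqrt_nonneg _
  have hden1 : (0:ℝ) < α * lam + 1 := by nlinarith
  have hden2 : (0:ℝ) < 4 - lam ^ 2 := by nlinarith
  have h2α : (0:ℝ) < 2 * α - 1 := by linarith
  -- the min is at most Θ_n
  have hmin : min (v / (1 + t * v))
      (min (-t / (1 + t * v)) (-((1 + 2 * lam * t) * (2 * lam - v)) / (1 + t * v)))
      ≤ -t / (1 + t * v) := (min_le_right _ _).trans (min_le_left _ _)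
  -- bounds on Θ_n in each region
  have key : -t / (1 + t * v) ≤ 1 / (α * lam + 1) ∨
      -t / (1 + t * v) ≤ 2 * lam * (2 * α - 1) / (4 - lam ^ 2) := by
    rcases htv with hA | hD
    · left
      obtain ⟨h1, h2, h3, h4⟩ := hA
      simp only at h1 h2 h3 h4
      have ht0 : t < 0 := by
        have : (0:ℝ) < 1 / (lam + 1) := by positivity
        linarith
      have e1 : -(t * ((α + 1) * lam)) ≤ 1 := by
        have h0 : (0:ℝ) < (α + 1) * lam := by positivity
        have := mul_le_mul_of_nonneg_right h1 h0.le
        rw [neg_mul, div_mul_cancel₀] at this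
        · linarith
        · positivity
      have hprod : 0 ≤ (-t) * (lam - 1 - v) := mul_nonneg (by linarith) (by linarith)
      have hdpos : 0 < 1 + t * v := by
        nlinarith [mul_pos (neg_pos.mpr ht0) hden1]
      rw [div_le_div_iff₀ hdpos hden1]
      nlinarith [e1, hprod]
    · right
      obtain ⟨h1, h2, h3, h4⟩ := hD
      simp only at h1 h2 h3 h4
      have ht0 : t < 0 := by
        have : (0:ℝ) < 2 / (lam + 4) := by positivity
        linarith
      have hD0 : (0:ℝ) < 2 - (1 - α) * lam ^ 2 := by
        nlinarith [mul_nonneg (by linarith : (0:ℝ) ≤ α - 1/2) (sq_nonneg lam),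
          mul_pos (by linarith : (0:ℝ) < 2 - lam) (by linarith : (0:ℝ) < 2 + lam)]
      have e1 : -t * (2 - (1 - α) * lam ^ 2) ≤ (2 * α - 1) * lam := by
        have := mul_le_mul_of_nonneg_right h1 hD0.le
        rw [neg_mul, div_mul_cancel₀ _ hD0.ne'] at this
        linarith
      have hprod : 0 ≤ (-t) * (lam / 2 - v) := mul_nonneg (by linarith) (by linarith)
      have hdpos : 0 < 1 + t * v := by
        nlinarith [mul_nonneg hD0.le hprod, mul_le_mul_of_nonneg_right e1 hlam0.le]
      rw [div_le_div_iff₀ hdpos hden2]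
      nlinarith [mul_nonneg (mul_nonneg (by linarith : (0:ℝ) ≤ 2 * lam) h2α.le) hprod,
        e1]
  split_ifs with hc
  · -- α ≤ c: need min ≤ 1/(αλ+1); show B2 ≤ B1
    have hc' : 4 * lam * α ≤ lam - 2 + s := by
      have := mul_le_mul_of_nonneg_right hc (by positivity : (0:ℝ) ≤ 4 * lam)
      rw [div_mul_cancel₀ _ (by positivity : (4:ℝ) * lam ≠ 0)] at this
      linarith
    have hcmp : 2 * lam * (2 * α - 1) / (4 - lam ^ 2) ≤ 1 / (α * lam + 1) := by
      rw [div_le_div_iff₀ hden2 hden1]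
      have hf1 : 4 * lam * α - (lam - 2 + s) ≤ 0 := by linarith
      have hf2 : 0 < 4 * lam * α - (lam - 2 - s) := by nlinarith
      nlinarith [mul_nonpos_of_nonpos_of_nonneg hf1 hf2.le]
    rcases key with h | h
    · exact hmin.trans h
    · exact hmin.trans (h.trans hcmp)
  · -- α > c: show B1 ≤ B2
    push_neg at hc
    have hc' : lam - 2 + s ≤ 4 * lam * α := by
      have := mul_le_mul_of_nonneg_right hc.le (by positivity : (0:ℝ) ≤ 4 * lam)
      rw [div_mul_cancel₀ _ (by positivity : (4:ℝ) * lam ≠ 0)] at this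
      linarith
    have hcmp : 1 / (α * lam + 1) ≤ 2 * lam * (2 * α - 1) / (4 - lam ^ 2) := by
      rw [div_le_div_iff₀ hden1 hden2]
      have hf1 : 0 ≤ 4 * lam * α - (lam - 2 + s) := by linarith
      have hf2 : 0 < 4 * lam * α - (lam - 2 - s) := by nlinarith
      nlinarith [mul_nonneg hf1 hf2.le]
    rcases key with h | h
    · exact hmin.trans (h.trans hcmp)
    · exact hmin.trans h
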